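/- arXiv:0909.0891 — 2 statements merged into one kernel-verified Lean document; each statement's English description precedes it below -/
import Mathlib

section
/- The relation ≤ on HNT, defined by τ ≤ σ if every vertex of the Harder-Narasimhan polygon of τ lies under the Harder-Narasimhan polygon of σ, is reflexive and transitive: for all τ, σ, υ ∈ HNT one has τ ≤ τ, and if τ ≤ σ and σ ≤ υ then τ ≤ υ. -/
open Polynomial

/-- `f ∈ ℚ[λ]` is a numerical polynomial if it takes integer values at all integers. -/
def IsNumericalPoly (f : ℚ[X]) : Prop := ∀ n : ℤ, ∃ k : ℤ, f.eval (n : ℚ) = (k : ℚ)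

/-- The eventual order on `ℚ[λ]`: `f ≤ g` iff `f(m) ≤ g(m)` for all sufficiently
large integers `m`. -/
def PolyLE (f g : ℚ[X]) : Prop := ∃ N : ℤ, ∀ m : ℤ, N ≤ m → f.eval (m : ℚ) ≤ g.eval (m : ℚ)

/-- The strict version of the eventual order on `ℚ[λ]`. -/
def PolyLT (f g : ℚ[X]) : Prop := PolyLE f g ∧ f ≠ g

/-- For a nonzero polynomial `f` of degree `d`, `rOf f = d! ·(leading coefficient of f)`;
and `rOf 0 = 0` (the leading coefficient of `0` is `0`, so no case split is needed). -/
def rOf (f : ℚ[X]) : ℚ := (Nat.factorial f.natDegree : ℚ) * f.leadingCoeff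

/-- A Harder–Narasimhan type of length `p ≥ 1` is here encoded as a function
`f : ℕ → ℚ[X]` with `f 0 = 0`, whose relevant values are `f 1, …, f p`: these are
numerical polynomials with `0 = f 0 < f 1 < ⋯ < f p`, all of the same degree, with
`0 = r(f 0) < r(f 1) < ⋯ < r(f p)`, satisfying the cross-multiplied form of the strict
decrease of the slopes of the successive differences:
`(r(f (i+1)) − r(f i))·(f i − f (i−1)) > (r(f i) − r(f (i−1)))·(f (i+1) − f i)`. -/
structure IsHNT (p : ℕ) (f : ℕ → ℚ[X]) : Prop where
  one_le : 1 ≤ p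
  zero : f 0 = 0
  numerical : ∀ i, 1 ≤ i → i ≤ p → IsNumericalPoly (f i)
  strict_lt : ∀ i j, i < j → j ≤ p → PolyLT (f i) (f j)
  deg_eq : ∀ i j, 1 ≤ i → i ≤ p → 1 ≤ j → j ≤ p → (f i).natDegree = (f j).natDegree
  r_strict_lt : ∀ i j, i < j → j ≤ p → rOf (f i) < rOf (f j)
  slope : ∀ i, 1 ≤ i → i + 1 ≤ p →
    PolyLT (C (rOf (f i) - rOf (f (i - 1))) * (f (i + 1) - f i))
           (C (rOf (f (i + 1)) - rOf (f i)) * (f i - f (i - 1)))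

/-- `z` belongs to the segment of `ℤ × ℚ[λ]` joining `x` and `y`: the first
coordinate of `z` is an integer and `z = t·x + (1−t)·y` for some rational
`0 ≤ t ≤ 1`. -/
def InSegment (x y z : ℚ × ℚ[X]) : Prop :=
  (∃ k : ℤ, z.1 = (k : ℚ)) ∧ ∃ t : ℚ, 0 ≤ t ∧ t ≤ 1 ∧
    z.1 = t * x.1 + (1 - t) * y.1 ∧ z.2 = t • x.2 + (1 - t) • y.2

/-- `z` belongs to the Harder–Narasimhan polygon of `(g 1, …, g q)`, i.e. to one of
the segments joining `x (i−1) = (r(g (i−1)), g (i−1))` and `x i = (r(g i), g i)`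
for `1 ≤ i ≤ q` (recall `g 0 = 0`, so `x 0 = (0, 0)`). -/
def InHNP (q : ℕ) (g : ℕ → ℚ[X]) (z : ℚ × ℚ[X]) : Prop :=
  ∃ i, 1 ≤ i ∧ i ≤ q ∧ InSegment (rOf (g (i - 1)), g (i - 1)) (rOf (g i), g i) z

/-- The point `w` lies under the point `z`: equal first coordinates, and
`w.2 ≤ z.2` in the eventual order on `ℚ[λ]`. -/
def LiesUnderPoint (w z : ℚ × ℚ[X]) : Prop := w.1 = z.1 ∧ PolyLE w.2 z.2

/-- The point `w` lies under the Harder–Narasimhan polygon of `(g 1, …, g q)`. -/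
def LiesUnderHNP (q : ℕ) (g : ℕ → ℚ[X]) (w : ℚ × ℚ[X]) : Prop :=
  ∃ z, InHNP q g z ∧ LiesUnderPoint w z

/-- The partial order on Harder–Narasimhan types: `(f 1, …, f p) ≤ (g 1, …, g q)` iff
for each `1 ≤ i ≤ p` the vertex `(r(f i), f i)` lies under the Harder–Narasimhan
polygon of `(g 1, …, g q)`. -/
def HNTle (p : ℕ) (f : ℕ → ℚ[X]) (q : ℕ) (g : ℕ → ℚ[X]) : Prop :=
  ∀ i, 1 ≤ i → i ≤ p → LiesUnderHNP q g (rOf (f i), f i)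

/-!
Reflexivity: a vertex `(r(f i), f i)` is itself a point of the polygon, since `r(f i)` is the
`d`-th forward difference of `f i` at `0` and hence an integer. Transitivity: for all large `m`,
the slope condition makes the polygon of `υ` evaluated at `m` a concave broken line, which lies
below the extension of each of its edges. So the region under it is convex, and an edge of the
polygon of `σ`, whose endpoints lie under the polygon of `υ`, lies under it as well.
-/

open Filter Set

lemma polyLE_iff_eventually {f g : ℚ[X]} :
    PolyLE f g ↔ ∀ᶠ m : ℤ in atTop, f.eval (m : ℚ) ≤ g.eval (m : ℚ) :=
  eventually_atTop.symm

lemma PolyLE.refl (f : ℚ[X]) : PolyLE f f := ⟨0, fun _ _ => le_rfl⟩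

lemma PolyLE.trans {f g h : ℚ[X]} (hfg : PolyLE f g) (hgh : PolyLE g h) : PolyLE f h := by
  rw [polyLE_iff_eventually] at *
  filter_upwards [hfg, hgh] with m h₁ h₂ using h₁.trans h₂

lemma exists_lt_mem_Icc_succ {α : Type*} [LinearOrder α] {R : ℕ → α} {u : ℕ} (hu : 1 ≤ u)
    {a : α} (h₀ : R 0 ≤ a) (hau : a ≤ R u) : ∃ e < u, a ∈ Icc (R e) (R (e + 1)) := by
  have hex : ∃ n, a ≤ R (n + 1) := ⟨u - 1, by rwa [Nat.sub_add_cancel hu]⟩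
  refine ⟨Nat.find hex, ?_, ?_, Nat.find_spec hex⟩
  · have := Nat.find_min' hex (m := u - 1) (by rwa [Nat.sub_add_cancel hu])
    omega
  · rcases h : Nat.find hex with _ | n
    · exact h₀
    · exact (not_le.mp (Nat.find_min hex (h ▸ n.lt_succ_self))).le

lemma IsNumericalPoly.exists_rOf_eq_intCast {f : ℚ[X]} (hf : IsNumericalPoly f) :
    ∃ k : ℤ, rOf f = k := by
  have hΔ : rOf f = (fwdDiff 1)^[f.natDegree] (fun x => f.eval x) 0 := by
    rw [fwdDiff_iter_degree_eq_factorial]; simp [rOf, mul_comm]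
  choose c hc using hf
  refine ⟨∑ k ∈ Finset.range (f.natDegree + 1),
    (-1) ^ (f.natDegree - k) * f.natDegree.choose k * c k, ?_⟩
  rw [hΔ, fwdDiff_iter_eq_sum_shift]
  push_cast
  refine Finset.sum_congr rfl fun k _ => ?_
  rw [zsmul_eq_mul, ← hc]
  simp

section Chords

variable (R Y : ℕ → ℚ)

def chordSlope (k : ℕ) : ℚ := (Y (k + 1) - Y k) / (R (k + 1) - R k)

def chordLine (k : ℕ) (a : ℚ) : ℚ := Y k + (a - R k) * chordSlope R Y k

variable {R}

lemma chordLine_affineCombo (k : ℕ) (t b c : ℚ) :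
    chordLine R Y k (t * b + (1 - t) * c)
      = t * chordLine R Y k b + (1 - t) * chordLine R Y k c := by
  unfold chordLine; ring

lemma chordLine_endpointCombo {k : ℕ} (hk : R k ≠ R (k + 1)) (t : ℚ) :
    chordLine R Y k (t * R k + (1 - t) * R (k + 1)) = t * Y k + (1 - t) * Y (k + 1) := by
  have : R (k + 1) - R k ≠ 0 := sub_ne_zero.mpr hk.symm
  unfold chordLine chordSlope
  field_simp
  ring

/-- Consecutive chord lines meet at the common vertex `R (k + 1)`. -/
lemma chordLine_succ_sub {k : ℕ} (hk : R k ≠ R (k + 1)) (a : ℚ) :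
    chordLine R Y (k + 1) a - chordLine R Y k a
      = (a - R (k + 1)) * (chordSlope R Y (k + 1) - chordSlope R Y k) := by
  have : R (k + 1) - R k ≠ 0 := sub_ne_zero.mpr hk.symm
  unfold chordLine chordSlope
  field_simp
  ring

/-- A polygon with decreasing slopes lies below the extension of each of its edges. -/
lemma chordLine_le_chordLine {u e k : ℕ} (hR : StrictMonoOn R (Iic u))
    (hslope : ∀ k, k + 2 ≤ u → chordSlope R Y (k + 1) ≤ chordSlope R Y k)
    (he : e < u) {a : ℚ} (ha : a ∈ Icc (R e) (R (e + 1))) (hk : k < u) :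
    chordLine R Y e a ≤ chordLine R Y k a := by
  have hne : ∀ k < u, R k ≠ R (k + 1) := fun k hk =>
    (hR (mem_Iic.mpr hk.le) (mem_Iic.mpr hk) k.lt_succ_self).ne
  have hmono : ∀ i j, i ≤ j → j ≤ u → R i ≤ R j := fun i j hij hj =>
    hR.monotoneOn (mem_Iic.mpr (hij.trans hj)) (mem_Iic.mpr hj) hij
  rcases le_total e k with hek | hke
  · induction k, hek using Nat.le_induction with
    | base => exact le_rfl
    | succ k hek ih =>
      have hdiff := chordLine_succ_sub Y (hne k (by omega)) a
      have ha' : a - R (k + 1) ≤ 0 := by linarith [ha.2, hmono (e + 1) (k + 1) (by omega) hk.le]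
      have hs := sub_nonpos.mpr (hslope k (by omega))
      linarith [ih (by omega), mul_nonneg_of_nonpos_of_nonpos ha' hs]
  · induction hke using Nat.decreasingInduction with
    | self => exact le_rfl
    | of_succ k hke ih =>
      have hdiff := chordLine_succ_sub Y (hne k (by omega)) a
      have ha' : 0 ≤ a - R (k + 1) := by linarith [ha.1, hmono (k + 1) e hke he.le]
      have hs := sub_nonpos.mpr (hslope k (by omega))
      linarith [ih (by omega), mul_nonpos_of_nonneg_of_nonpos ha' hs]

end Chords

namespace IsHNT

variable {u : ℕ} {v : ℕ → ℚ[X]}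

lemma strictMonoOn_rOf (hυ : IsHNT u v) : StrictMonoOn (rOf ∘ v) (Iic u) :=
  fun i _ j hj hij => hυ.r_strict_lt i j hij hj

lemma rOf_zero (hυ : IsHNT u v) : rOf (v 0) = 0 := by
  simp [hυ.zero, rOf]

lemma eventually_chordSlope_succ_le (hυ : IsHNT u v) :
    ∀ᶠ m : ℤ in atTop, ∀ k, k + 2 ≤ u →
      chordSlope (rOf ∘ v) (eval (m : ℚ) ∘ v) (k + 1)
        ≤ chordSlope (rOf ∘ v) (eval (m : ℚ) ∘ v) k := by
  have hfin : {k | k + 2 ≤ u}.Finite := (finite_Iic u).subset fun k (hk : k + 2 ≤ u) =>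
    mem_Iic.mpr (by omega)
  have hslope := hfin.eventually_all.mpr fun k (hk : k + 2 ≤ u) =>
    polyLE_iff_eventually.mp (hυ.slope (k + 1) (by omega) hk).1
  filter_upwards [hslope] with m hm k hk
  have hmk := hm k hk
  simp only [eval_mul, eval_C, eval_sub, Nat.add_sub_cancel] at hmk
  have h₁ := hυ.r_strict_lt k (k + 1) (by omega) (by omega)
  have h₂ := hυ.r_strict_lt (k + 1) (k + 2) (by omega) hk
  unfold chordSlope
  rw [div_le_div_iff₀ (by simpa using h₂) (by simpa using h₁)]
  simp only [Function.comp_apply]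
  linarith

lemma inHNP_vertex (hυ : IsHNT u v) {k : ℕ} (hk : k ≤ u) : InHNP u v (rOf (v k), v k) := by
  rcases Nat.eq_zero_or_pos k with rfl | hk₀
  · exact ⟨1, le_rfl, hυ.one_le, ⟨0, by simp [hυ.rOf_zero]⟩, 1, zero_le_one, le_rfl,
      by simp, by simp⟩
  · exact ⟨k, hk₀, hk, (hυ.numerical k hk₀ hk).exists_rOf_eq_intCast, 0, le_rfl, zero_le_one,
      by simp, by simp⟩

lemma exists_chordLine_of_inHNP (hυ : IsHNT u v) {z : ℚ × ℚ[X]} (hz : InHNP u v z) :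
    ∃ k < u, z.1 ∈ Icc (rOf (v k)) (rOf (v (k + 1))) ∧
      ∀ x : ℚ, z.2.eval x = chordLine (rOf ∘ v) (eval x ∘ v) k z.1 := by
  obtain ⟨i, hi₁, hiu, -, t, ht₀, ht₁, hz₁, hz₂⟩ := hz
  obtain ⟨k, rfl⟩ : ∃ k, i = k + 1 := ⟨i - 1, by omega⟩
  simp only [Nat.add_sub_cancel] at hz₁ hz₂
  have hlt := hυ.r_strict_lt k (k + 1) k.lt_succ_self hiu
  refine ⟨k, by omega, ⟨by nlinarith, by nlinarith⟩, fun x => ?_⟩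
  have hline := chordLine_endpointCombo (R := rOf ∘ v) (eval x ∘ v) hlt.ne t
  simp only [Function.comp_apply] at hline
  rw [hz₁, hline, hz₂]
  simp

lemma mem_Icc_of_inHNP (hυ : IsHNT u v) {z : ℚ × ℚ[X]} (hz : InHNP u v z) :
    z.1 ∈ Icc (rOf (v 0)) (rOf (v u)) := by
  obtain ⟨k, hk, hzk, -⟩ := hυ.exists_chordLine_of_inHNP hz
  have hmono := hυ.strictMonoOn_rOf.monotoneOn
  exact ⟨(hmono (mem_Iic.mpr (Nat.zero_le u)) (mem_Iic.mpr hk.le) (Nat.zero_le k)).trans hzk.1,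
    hzk.2.trans (hmono (mem_Iic.mpr hk) (mem_Iic.mpr le_rfl) hk)⟩

lemma exists_inHNP_of_mem_Icc (hυ : IsHNT u v) {e : ℕ} (he : e < u) {a : ℚ}
    (ha_int : ∃ n : ℤ, a = n) (ha : a ∈ Icc (rOf (v e)) (rOf (v (e + 1)))) :
    ∃ z, InHNP u v z ∧ z.1 = a ∧ ∀ x : ℚ, z.2.eval x = chordLine (rOf ∘ v) (eval x ∘ v) e a := by
  have hlt := hυ.r_strict_lt e (e + 1) e.lt_succ_self he
  have ha_seg : a ∈ segment ℚ (rOf (v (e + 1))) (rOf (v e)) := by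
    rwa [segment_symm, segment_eq_Icc hlt.le]
  rw [segment_eq_image] at ha_seg
  obtain ⟨t, ⟨ht₀, ht₁⟩, hta⟩ := ha_seg
  have hta' : a = t * rOf (v e) + (1 - t) * rOf (v (e + 1)) := by
    simp only [← hta, smul_eq_mul]; ring
  refine ⟨(a, t • v e + (1 - t) • v (e + 1)), ⟨e + 1, by omega, he, ?_⟩, rfl, fun x => ?_⟩
  · exact ⟨ha_int, t, ht₀, ht₁, hta', rfl⟩
  · have hline := chordLine_endpointCombo (R := rOf ∘ v) (eval x ∘ v) hlt.ne t
    simp only [Function.comp_apply] at hline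
    rw [hta', hline]
    simp

lemma eventually_le_chordLine (hυ : IsHNT u v) {w : ℚ × ℚ[X]} (hw : LiesUnderHNP u v w) :
    ∀ᶠ m : ℤ in atTop, ∀ e < u,
      w.2.eval (m : ℚ) ≤ chordLine (rOf ∘ v) (eval (m : ℚ) ∘ v) e w.1 := by
  obtain ⟨z, hz, hw₁, hw₂⟩ := hw
  obtain ⟨k, hk, hzk, hz₂⟩ := hυ.exists_chordLine_of_inHNP hz
  filter_upwards [polyLE_iff_eventually.mp hw₂, hυ.eventually_chordSlope_succ_le]
    with m hm hslope e he
  rw [hw₁]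
  calc w.2.eval (m : ℚ) ≤ z.2.eval (m : ℚ) := hm
    _ = chordLine (rOf ∘ v) (eval (m : ℚ) ∘ v) k z.1 := hz₂ m
    _ ≤ chordLine (rOf ∘ v) (eval (m : ℚ) ∘ v) e z.1 :=
      chordLine_le_chordLine _ hυ.strictMonoOn_rOf hslope hk hzk he

lemma liesUnderHNP_of_inSegment (hυ : IsHNT u v) {x y z : ℚ × ℚ[X]} (hx : LiesUnderHNP u v x)
    (hy : LiesUnderHNP u v y) (hz : InSegment x y z) : LiesUnderHNP u v z := by
  obtain ⟨hz_int, t, ht₀, ht₁, hz₁, hz₂⟩ := hz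
  have hz_mem : z.1 ∈ Icc (rOf (v 0)) (rOf (v u)) := by
    obtain ⟨x', hx', hx₁, -⟩ := hx
    obtain ⟨y', hy', hy₁, -⟩ := hy
    rw [hz₁, hx₁, hy₁, ← smul_eq_mul, ← smul_eq_mul]
    exact convex_Icc _ _ (hυ.mem_Icc_of_inHNP hx') (hυ.mem_Icc_of_inHNP hy') ht₀
      (sub_nonneg.mpr ht₁) (add_sub_cancel t 1)
  obtain ⟨e, he, hze⟩ := exists_lt_mem_Icc_succ (R := rOf ∘ v) hυ.one_le hz_mem.1 hz_mem.2
  obtain ⟨z', hz', hz'₁, hz'₂⟩ := hυ.exists_inHNP_of_mem_Icc he hz_int hze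
  refine ⟨z', hz', hz'₁.symm, polyLE_iff_eventually.mpr ?_⟩
  filter_upwards [hυ.eventually_le_chordLine hx, hυ.eventually_le_chordLine hy] with m hxm hym
  rw [hz'₂, hz₂, hz₁, chordLine_affineCombo]
  simp only [eval_add, eval_smul, smul_eq_mul]
  exact add_le_add (mul_le_mul_of_nonneg_left (hxm e he) ht₀)
    (mul_le_mul_of_nonneg_left (hym e he) (sub_nonneg.mpr ht₁))

end IsHNT

lemma LiesUnderHNP.of_liesUnderPoint {q : ℕ} {g : ℕ → ℚ[X]} {w z : ℚ × ℚ[X]}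
    (hwz : LiesUnderPoint w z) (hz : LiesUnderHNP q g z) : LiesUnderHNP q g w := by
  obtain ⟨z', hz', hzz'₁, hzz'₂⟩ := hz
  exact ⟨z', hz', hwz.1.trans hzz'₁, hwz.2.trans hzz'₂⟩

lemma HNTle.liesUnderHNP_vertex {q u : ℕ} {g v : ℕ → ℚ[X]} (hσ : IsHNT q g) (hυ : IsHNT u v)
    (h : HNTle q g u v) {k : ℕ} (hk : k ≤ q) : LiesUnderHNP u v (rOf (g k), g k) := by
  rcases Nat.eq_zero_or_pos k with rfl | hk₀
  · rw [hσ.zero, ← hυ.zero]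
    exact ⟨_, hυ.inHNP_vertex (Nat.zero_le u), rfl, PolyLE.refl _⟩
  · exact h k hk₀ hk

/-- The relation `≤` on Harder–Narasimhan types is reflexive and transitive. -/
theorem hntLE_refl_trans
    (p : ℕ) (f : ℕ → ℚ[X]) (q : ℕ) (g : ℕ → ℚ[X]) (u : ℕ) (v : ℕ → ℚ[X])
    (hτ : IsHNT p f) (hσ : IsHNT q g) (hυ : IsHNT u v) :
    HNTle p f p f ∧ (HNTle p f q g → HNTle q g u v → HNTle p f u v) := by
  refine ⟨fun i _ hip => ⟨_, hτ.inHNP_vertex hip, rfl, PolyLE.refl _⟩,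
    fun hfg hgu i hi₁ hip => ?_⟩
  obtain ⟨z, ⟨j, -, hjq, hz⟩, hfz⟩ := hfg i hi₁ hip
  have hg_prev := hgu.liesUnderHNP_vertex hσ hυ (k := j - 1) (by omega)
  have hg_j := hgu.liesUnderHNP_vertex hσ hυ hjq
  exact .of_liesUnderPoint hfz (hυ.liesUnderHNP_of_inSegment hg_prev hg_j hz)
end

section
/- The relation ≤ on HNT, defined by τ ≤ σ if every vertex of the Harder-Narasimhan polygon of τ lies under the Harder-Narasimhan polygon of σ, is antisymmetric: if τ = (f_1, …, f_p) and σ = (g_1, …, g_q) are elements of HNT with τ ≤ σ and σ ≤ τ, then p = q and f_i = g_i for all 1 ≤ i ≤ p. -/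
open Polynomial

/-!
Fix an integer `m` and evaluate every polynomial at `m`. The vertices `(r(f i), f i (m))` of a
Harder–Narasimhan type then form a polygon in the plane which, for all large `m`, is strictly
concave, and the hypotheses say that the vertices of each of the two polygons lie under the other
polygon. Concavity means that a polygon lies under the line carrying any of its edges. This forces
the last vertices to agree, and once the vertices `i + 1` and `j + 1` of the two polygons agree,
comparing their edges ending there shows that their slopes agree and then that the vertices `i`
and `j` agree. Descending induction gives equal polygons for every large `m`, and polynomials
agreeing at infinitely many integers are equal.
-/

open Filter

section ConcavePolygon

variable {K : Type*} [Field K] [LinearOrder K]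

def edgeSlope (v : ℕ → K × K) (i : ℕ) : K :=
  ((v (i + 1)).2 - (v i).2) / ((v (i + 1)).1 - (v i).1)

structure IsConcavePolygon (p : ℕ) (v : ℕ → K × K) : Prop where
  one_le : 1 ≤ p
  zero : v 0 = 0
  fst_lt_succ : ∀ i < p, (v i).1 < (v (i + 1)).1
  slope_lt : ∀ i, i + 1 < p → edgeSlope v (i + 1) < edgeSlope v i

def polygon (p : ℕ) (v : ℕ → K × K) : Set (K × K) :=
  ⋃ i < p, segment K (v i) (v (i + 1))

def LiesUnderPolygon (p : ℕ) (v : ℕ → K × K) (w : K × K) : Prop :=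
  ∃ z ∈ polygon p v, w.1 = z.1 ∧ w.2 ≤ z.2

def edgeLineGap (v : ℕ → K × K) (e : ℕ) (z : K × K) : K :=
  (v (e + 1)).2 + edgeSlope v e * (z.1 - (v (e + 1)).1) - z.2

theorem convex_setOf_edgeLineGap_nonneg [IsStrictOrderedRing K] (v : ℕ → K × K) (e : ℕ) :
    Convex K {z : K × K | 0 ≤ edgeLineGap v e z} := by
  intro x hx y hy s t hs ht hst
  obtain rfl : t = 1 - s := by linarith
  simp only [Set.mem_ofPred_eq, edgeLineGap, Prod.fst_add, Prod.snd_add, Prod.smul_fst,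
    Prod.smul_snd, smul_eq_mul] at hx hy ⊢
  nlinarith [mul_nonneg hs hx, mul_nonneg ht hy]

namespace IsConcavePolygon

variable {p q : ℕ} {v w : ℕ → K × K}

theorem fst_strictMonoOn (hv : IsConcavePolygon p v) :
    StrictMonoOn (fun i => (v i).1) (Set.Iic p) :=
  strictMonoOn_Iic_of_lt_succ hv.fst_lt_succ

theorem edgeSlope_strictAntiOn (hv : IsConcavePolygon p v) :
    StrictAntiOn (edgeSlope v) (Set.Iic (p - 1)) :=
  strictAntiOn_Iic_of_succ_lt fun i hi => hv.slope_lt i (by omega)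

theorem snd_succ_eq (hv : IsConcavePolygon p v) {i : ℕ} (hi : i < p) :
    (v i).2 = (v (i + 1)).2 + edgeSlope v i * ((v i).1 - (v (i + 1)).1) := by
  have hne := sub_ne_zero.2 (hv.fst_lt_succ i hi).ne'
  rw [edgeSlope]
  field_simp
  ring

theorem edgeLineGap_vertex_succ (hv : IsConcavePolygon p v) (e : ℕ) {k : ℕ} (hk : k < p) :
    edgeLineGap v e (v (k + 1)) = edgeLineGap v e (v k)
      + (edgeSlope v e - edgeSlope v k) * ((v (k + 1)).1 - (v k).1) := by
  simp only [edgeLineGap]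
  rw [hv.snd_succ_eq hk]
  ring

theorem fst_nonneg (hv : IsConcavePolygon p v) {i : ℕ} (hi : i ≤ p) : 0 ≤ (v i).1 := by
  simpa [hv.zero] using hv.fst_strictMonoOn.monotoneOn (Nat.zero_le p) hi (Nat.zero_le i)

theorem eq_zero_of_vertex_eq_zero (hv : IsConcavePolygon p v) {i : ℕ} (hi : i ≤ p) (h : v i = 0) :
    i = 0 := by
  by_contra hi0
  have := hv.fst_strictMonoOn (Nat.zero_le p) hi (Nat.pos_of_ne_zero hi0)
  simp [hv.zero, h] at this

variable [IsStrictOrderedRing K]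

theorem edgeLineGap_vertex_nonneg (hv : IsConcavePolygon p v) {e k : ℕ} (he : e < p)
    (hk : k ≤ p) : 0 ≤ edgeLineGap v e (v k) := by
  have hgap : edgeLineGap v e (v (e + 1)) = 0 := by simp [edgeLineGap]
  rcases le_or_gt k e with hke | hek
  · induction hke using Nat.decreasingInduction with
    | self => simpa [hv.edgeLineGap_vertex_succ e he] using hgap.ge
    | of_succ k hke ih =>
      have hslope : edgeSlope v e < edgeSlope v k :=
        hv.edgeSlope_strictAntiOn (show k ≤ p - 1 by omega) (show e ≤ p - 1 by omega) hke
      have hstep := hv.edgeLineGap_vertex_succ e (k := k) (by omega)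
      nlinarith [ih (by omega), hv.fst_lt_succ k (by omega)]
  · induction k, hek using Nat.le_induction with
    | base => exact hgap.ge
    | succ k hek ih =>
      have hslope : edgeSlope v k ≤ edgeSlope v e := hv.edgeSlope_strictAntiOn.antitoneOn
        (show e ≤ p - 1 by omega) (show k ≤ p - 1 by omega) (by omega)
      rw [hv.edgeLineGap_vertex_succ e (by omega)]
      nlinarith [ih (by omega), hv.fst_lt_succ k (by omega)]

theorem edgeLineGap_nonneg_of_mem_polygon (hv : IsConcavePolygon p v) {e : ℕ} (he : e < p)
    {z : K × K} (hz : z ∈ polygon p v) : 0 ≤ edgeLineGap v e z := by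
  obtain ⟨k, hk, hz⟩ := Set.mem_iUnion₂.1 hz
  exact (convex_setOf_edgeLineGap_nonneg v e).segment_subset
    (hv.edgeLineGap_vertex_nonneg he hk.le) (hv.edgeLineGap_vertex_nonneg he hk) hz

theorem fst_le_of_mem_polygon (hv : IsConcavePolygon p v) {z : K × K}
    (hz : z ∈ polygon p v) : z.1 ≤ (v p).1 := by
  obtain ⟨k, hk, hz⟩ := Set.mem_iUnion₂.1 hz
  have hmono := hv.fst_strictMonoOn.monotoneOn
  have hzk := segment_subset_Icc (hv.fst_lt_succ k hk).le (Prod.segment_subset _ _ hz).1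
  exact hzk.2.trans (hmono (show k + 1 ≤ p from hk) (le_refl p) hk)

theorem zero_mem_polygon (hv : IsConcavePolygon p v) : (0 : K × K) ∈ polygon p v :=
  Set.mem_iUnion₂.2 ⟨0, hv.one_le, hv.zero ▸ left_mem_segment K _ _⟩

theorem edgeLineGap_nonneg_of_liesUnder (hv : IsConcavePolygon p v) {e : ℕ} (he : e < p)
    {z : K × K} (hz : LiesUnderPolygon p v z) : 0 ≤ edgeLineGap v e z := by
  obtain ⟨y, hy, hzy₁, hzy₂⟩ := hz
  have hgap := hv.edgeLineGap_nonneg_of_mem_polygon he hy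
  simp only [edgeLineGap, hzy₁] at hgap ⊢
  linarith

theorem fst_le_of_liesUnder (hv : IsConcavePolygon p v) {z : K × K}
    (hz : LiesUnderPolygon p v z) : z.1 ≤ (v p).1 := by
  obtain ⟨y, hy, hzy₁, -⟩ := hz
  exact hzy₁ ▸ hv.fst_le_of_mem_polygon hy

theorem zero_liesUnder (hv : IsConcavePolygon p v) : LiesUnderPolygon p v 0 :=
  ⟨0, hv.zero_mem_polygon, rfl, le_rfl⟩

theorem last_eq (hv : IsConcavePolygon p v) (hw : IsConcavePolygon q w)
    (hvw : LiesUnderPolygon q w (v p)) (hwv : LiesUnderPolygon p v (w q)) : v p = w q := by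
  have hfst : (v p).1 = (w q).1 :=
    le_antisymm (hw.fst_le_of_liesUnder hvw) (hv.fst_le_of_liesUnder hwv)
  have hp := hv.one_le
  have hq := hw.one_le
  have h₁ := hw.edgeLineGap_nonneg_of_liesUnder (e := q - 1) (by omega) hvw
  have h₂ := hv.edgeLineGap_nonneg_of_liesUnder (e := p - 1) (by omega) hwv
  simp only [edgeLineGap, Nat.sub_add_cancel hp, Nat.sub_add_cancel hq, hfst, sub_self,
    mul_zero, add_zero, sub_nonneg] at h₁ h₂
  exact Prod.ext hfst (le_antisymm h₁ h₂)

theorem edgeSlope_le_of_succ_eq (hv : IsConcavePolygon p v) (hw : IsConcavePolygon q w)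
    {i j : ℕ} (hi : i < p) (hj : j < q) (hij : v (i + 1) = w (j + 1))
    (hvw : LiesUnderPolygon q w (v i)) : edgeSlope w j ≤ edgeSlope v i := by
  have hgap := hw.edgeLineGap_nonneg_of_liesUnder hj hvw
  have hvi := hv.snd_succ_eq hi
  simp only [edgeLineGap, ← hij] at hgap
  have hprod : 0 ≤ (edgeSlope v i - edgeSlope w j) * ((v (i + 1)).1 - (v i).1) := by linarith
  exact sub_nonneg.1 (nonneg_of_mul_nonneg_left hprod (sub_pos.2 (hv.fst_lt_succ i hi)))

theorem fst_le_of_succ_eq (hv : IsConcavePolygon p v) (hw : IsConcavePolygon q w)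
    {i j : ℕ} (hi : i < p) (hj : j < q) (hij : v (i + 1) = w (j + 1))
    (hs : edgeSlope v i = edgeSlope w j) (hvw : LiesUnderPolygon q w (v i)) :
    (w j).1 ≤ (v i).1 := by
  rcases j with _ | j
  · simpa [hw.zero] using hv.fst_nonneg hi.le
  -- the edge of `w` before vertex `j + 1` is strictly steeper than the common edge line
  have hgap := hw.edgeLineGap_nonneg_of_liesUnder (e := j) (by omega) hvw
  have hwj := hw.snd_succ_eq hj
  have hvi := hv.snd_succ_eq hi
  rw [← hij, ← hs] at hwj
  simp only [edgeLineGap] at hgap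
  have hprod : 0 ≤ (edgeSlope w j - edgeSlope v i) * ((v i).1 - (w (j + 1)).1) := by linarith
  have hsteep : edgeSlope v i < edgeSlope w j := hs ▸ hw.slope_lt j hj
  exact sub_nonneg.1 (nonneg_of_mul_nonneg_right hprod (sub_pos.2 hsteep))

theorem eq_of_succ_eq (hv : IsConcavePolygon p v) (hw : IsConcavePolygon q w)
    {i j : ℕ} (hi : i < p) (hj : j < q) (hij : v (i + 1) = w (j + 1))
    (hvw : LiesUnderPolygon q w (v i)) (hwv : LiesUnderPolygon p v (w j)) : v i = w j := by
  have hs : edgeSlope v i = edgeSlope w j :=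
    le_antisymm (hw.edgeSlope_le_of_succ_eq hv hj hi hij.symm hwv)
      (hv.edgeSlope_le_of_succ_eq hw hi hj hij hvw)
  have hfst : (v i).1 = (w j).1 :=
    le_antisymm (hw.fst_le_of_succ_eq hv hj hi hij.symm hs.symm hwv)
      (hv.fst_le_of_succ_eq hw hi hj hij hs hvw)
  refine Prod.ext hfst ?_
  rw [hv.snd_succ_eq hi, hw.snd_succ_eq hj, hij, hs, hfst]

theorem eq_of_liesUnderPolygon (hv : IsConcavePolygon p v) (hw : IsConcavePolygon q w)
    (hvw : ∀ i, 1 ≤ i → i ≤ p → LiesUnderPolygon q w (v i))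
    (hwv : ∀ j, 1 ≤ j → j ≤ q → LiesUnderPolygon p v (w j)) :
    p = q ∧ ∀ i ≤ p, v i = w i := by
  have hvw' : ∀ i ≤ p, LiesUnderPolygon q w (v i) := fun i hi =>
    i.eq_zero_or_pos.elim (fun h => h ▸ hv.zero ▸ hw.zero_liesUnder) (fun h => hvw i h hi)
  have hwv' : ∀ j ≤ q, LiesUnderPolygon p v (w j) := fun j hj =>
    j.eq_zero_or_pos.elim (fun h => h ▸ hw.zero ▸ hv.zero_liesUnder) (fun h => hwv j h hj)
  have hdesc : ∀ k, k ≤ p → k ≤ q → v (p - k) = w (q - k) := by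
    intro k
    induction k with
    | zero => exact fun _ _ => hv.last_eq hw (hvw' p le_rfl) (hwv' q le_rfl)
    | succ k ih =>
      intro hkp hkq
      have hsucc := ih (by omega) (by omega)
      rw [show p - k = p - (k + 1) + 1 by omega, show q - k = q - (k + 1) + 1 by omega] at hsucc
      exact hv.eq_of_succ_eq hw (by omega) (by omega) hsucc (hvw' _ (by omega))
        (hwv' _ (by omega))
  have hpq : p = q := by
    rcases lt_trichotomy p q with h | h | h
    · have := hw.eq_zero_of_vertex_eq_zero (i := q - p) (by omega)
        (by rw [← hdesc p le_rfl h.le, Nat.sub_self, hv.zero])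
      omega
    · exact h
    · have := hv.eq_zero_of_vertex_eq_zero (i := p - q) (by omega)
        (by rw [hdesc q h.le le_rfl, Nat.sub_self, hw.zero])
      omega
  subst hpq
  refine ⟨rfl, fun i hi => ?_⟩
  simpa [Nat.sub_sub_self hi] using hdesc (p - i) (by omega) (by omega)

end IsConcavePolygon

end ConcavePolygon

theorem PolyLE.eventually {f g : ℚ[X]} (h : PolyLE f g) :
    ∀ᶠ m : ℤ in atTop, f.eval (m : ℚ) ≤ g.eval (m : ℚ) :=
  eventually_atTop.2 h

theorem eventually_eval_ne_of_ne {f g : ℚ[X]} (h : f ≠ g) :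
    ∀ᶠ m : ℤ in atTop, f.eval (m : ℚ) ≠ g.eval (m : ℚ) := by
  have hfin : {m : ℤ | f.eval (m : ℚ) = g.eval (m : ℚ)}.Finite := by
    refine ((finite_setOfPred_isRoot (sub_ne_zero.2 h)).preimage Int.cast_injective.injOn).subset ?_
    intro m hm
    simpa [IsRoot, sub_eq_zero] using hm
  exact atTop_le_cofinite hfin.compl_mem_cofinite

theorem PolyLT.eventually_lt {f g : ℚ[X]} (h : PolyLT f g) :
    ∀ᶠ m : ℤ in atTop, f.eval (m : ℚ) < g.eval (m : ℚ) :=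
  (h.1.eventually.and (eventually_eval_ne_of_ne h.2)).mono fun _ hm => hm.1.lt_of_ne hm.2

theorem eq_of_eventually_eval_eq {f g : ℚ[X]}
    (h : ∀ᶠ m : ℤ in atTop, f.eval (m : ℚ) = g.eval (m : ℚ)) : f = g := by
  by_contra hne
  obtain ⟨m, hm⟩ := ((eventually_eval_ne_of_ne hne).and h).exists
  exact hm.1 hm.2

def hnVertex (f : ℕ → ℚ[X]) (m : ℤ) (i : ℕ) : ℚ × ℚ := (rOf (f i), (f i).eval (m : ℚ))

theorem IsHNT.eventually_isConcavePolygon {p : ℕ} {f : ℕ → ℚ[X]} (h : IsHNT p f) :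
    ∀ᶠ m : ℤ in atTop, IsConcavePolygon p (hnVertex f m) := by
  have hslope : ∀ i ∈ Set.Iio (p - 1), ∀ᶠ m : ℤ in atTop,
      edgeSlope (hnVertex f m) (i + 1) < edgeSlope (hnVertex f m) i := by
    intro i hi
    rw [Set.mem_Iio] at hi
    filter_upwards [(h.slope (i + 1) (by omega) (by omega)).eventually_lt] with m hm
    simp only [eval_mul, eval_C, eval_sub, Nat.add_sub_cancel] at hm
    have hr₁ := sub_pos.2 (h.r_strict_lt i (i + 1) (by omega) (by omega))
    have hr₂ := sub_pos.2 (h.r_strict_lt (i + 1) (i + 2) (by omega) (by omega))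
    simp only [edgeSlope, hnVertex]
    rw [div_lt_div_iff₀ hr₂ hr₁]
    linarith
  filter_upwards [(Set.finite_Iio (p - 1)).eventually_all.2 hslope] with m hm
  exact
    { one_le := h.one_le
      zero := by simp [hnVertex, h.zero, rOf]
      fst_lt_succ := fun i hi => h.r_strict_lt i (i + 1) (by omega) hi
      slope_lt := fun i hi => hm i (by rw [Set.mem_Iio]; omega) }

theorem InHNP.mem_polygon {q : ℕ} {g : ℕ → ℚ[X]} {z : ℚ × ℚ[X]} (hz : InHNP q g z) (m : ℤ) :
    (z.1, z.2.eval (m : ℚ)) ∈ polygon q (hnVertex g m) := by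
  obtain ⟨k, hk, hkq, -, t, ht₀, ht₁, hz₁, hz₂⟩ := hz
  refine Set.mem_iUnion₂.2 ⟨k - 1, by omega, t, 1 - t, ht₀, by linarith, by ring, ?_⟩
  rw [Nat.sub_add_cancel hk]
  ext
  · simp [hnVertex, hz₁]
  · simp [hnVertex, hz₂]

theorem HNTle.eventually_liesUnderPolygon {p q : ℕ} {f g : ℕ → ℚ[X]} (h : HNTle p f q g) :
    ∀ᶠ m : ℤ in atTop, ∀ i, 1 ≤ i → i ≤ p →
      LiesUnderPolygon q (hnVertex g m) (hnVertex f m i) := by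
  have hunder : ∀ i ∈ Set.Icc 1 p, ∀ᶠ m : ℤ in atTop,
      LiesUnderPolygon q (hnVertex g m) (hnVertex f m i) := by
    intro i hi
    obtain ⟨z, hz, hz₁, hz₂⟩ := h i hi.1 hi.2
    filter_upwards [hz₂.eventually] with m hm
    exact ⟨_, hz.mem_polygon m, hz₁, hm⟩
  filter_upwards [(Set.finite_Icc 1 p).eventually_all.2 hunder] with m hm i hi hip
  exact hm i ⟨hi, hip⟩

/-- The relation `≤` on Harder–Narasimhan types is antisymmetric: if `τ ≤ σ` and
`σ ≤ τ` then the two types have the same length and the same entries. -/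
theorem hntLE_antisymm
    (p : ℕ) (f : ℕ → ℚ[X]) (q : ℕ) (g : ℕ → ℚ[X])
    (hτ : IsHNT p f) (hσ : IsHNT q g)
    (h1 : HNTle p f q g) (h2 : HNTle q g p f) :
    p = q ∧ ∀ i, 1 ≤ i → i ≤ p → f i = g i := by
  have hvertex : ∀ᶠ m : ℤ in atTop, p = q ∧ ∀ i ≤ p, hnVertex f m i = hnVertex g m i := by
    filter_upwards [hτ.eventually_isConcavePolygon, hσ.eventually_isConcavePolygon,
      h1.eventually_liesUnderPolygon, h2.eventually_liesUnderPolygon] with m hτm hσm h1m h2m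
    exact hτm.eq_of_liesUnderPolygon hσm h1m h2m
  obtain ⟨-, hpq, -⟩ := hvertex.exists
  refine ⟨hpq, fun i _ hip => eq_of_eventually_eval_eq ?_⟩
  filter_upwards [hvertex] with m hm
  exact congrArg Prod.snd (hm.2 i hip)
end
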